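/- arXiv:2002.00888 — 6 statements merged into one kernel-verified Lean document; each statement's English description precedes it below -/
import Mathlib

section
/- If (α_k x + β_k y), for 1 ≤ k ≤ 4, are pairwise non-proportional nonzero linear forms over ℂ, then their cubes (α_k x + β_k y)³ are linearly independent in ℂ[x,y]. -/
open MvPolynomial

/-!
In the basis `X 0 ^ j * X 1 ^ (m - j)` of binary forms of degree `m`, the coefficients of
`(v * X 0 + w * X 1) ^ m` are `choose m j * v ^ j * w ^ (m - j)`. For `m + 1` such forms the
coefficient matrix is a projective Vandermonde matrix with columns scaled by binomial coefficients,
whose determinant is a nonzero multiple of `∏_{i < j} (v j * w i - v i * w j)`; non-proportionality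
makes every factor nonzero.
-/

theorem LinearIndependent.sum_smul_of_isUnit {K M ι : Type*} [Field K] [AddCommGroup M]
    [Module K M] [Fintype ι] [DecidableEq ι] {e : ι → M} (he : LinearIndependent K e)
    {A : Matrix ι ι K} (hA : IsUnit A) : LinearIndependent K fun i => ∑ j, A i j • e j := by
  simpa [Function.comp_def, Fintype.linearCombination_apply] using
    (Matrix.linearIndependent_rows_iff_isUnit.mpr hA).map' (Fintype.linearCombination K e)
      (LinearMap.ker_eq_bot.mpr he.fintypeLinearCombination_injective)

theorem mul_sub_mul_ne_zero_of_not_proportional {K : Type*} [Field K] {a b c d : K}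
    (hab : (a, b) ≠ (0, 0)) (hcd : ∀ t : K, ¬(c = t * a ∧ d = t * b)) : c * b - a * d ≠ 0 := by
  intro h
  rcases eq_or_ne a 0 with rfl | ha
  · have hb : b ≠ 0 := by rintro rfl; exact hab rfl
    refine hcd (d / b) ⟨?_, by field_simp⟩
    simpa [hb] using h
  · exact hcd (c / a) ⟨by field_simp, by field_simp; linear_combination -h⟩

section BinaryForms

variable {R : Type*} [CommSemiring R]

theorem linearIndependent_X_zero_pow_mul_X_one_pow (m : ℕ) :
    LinearIndependent R fun j : Fin (m + 1) =>
      (X 0 ^ (j : ℕ) * X 1 ^ (j.rev : ℕ) : MvPolynomial (Fin 2) R) := by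
  have hmono : (fun j : Fin (m + 1) => (X 0 ^ (j : ℕ) * X 1 ^ (j.rev : ℕ) : MvPolynomial (Fin 2) R))
      = fun j : Fin (m + 1) =>
        monomial (Finsupp.single 0 (j : ℕ) + Finsupp.single 1 (j.rev : ℕ)) (1 : R) := by
    ext1 j
    rw [X_pow_eq_monomial, X_pow_eq_monomial, monomial_mul, one_mul]
  rw [hmono]
  refine (basisMonomials (Fin 2) R).linearIndependent.comp _ fun i j hij => ?_
  exact Fin.ext (by simpa using congrArg (· 0) hij)

theorem linearForm_pow_eq_sum (a b : R) (m : ℕ) :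
    (C a * X 0 + C b * X 1 : MvPolynomial (Fin 2) R) ^ m =
      ∑ j : Fin (m + 1), (a ^ (j : ℕ) * b ^ (j.rev : ℕ) * m.choose j) •
        (X 0 ^ (j : ℕ) * X 1 ^ (j.rev : ℕ)) := by
  rw [add_pow, ← Fin.sum_univ_eq_sum_range]
  refine Finset.sum_congr rfl fun j _ => ?_
  simp only [Fin.val_rev, Nat.add_sub_add_right, mul_pow, ← map_pow, smul_eq_C_mul, map_mul,
    map_natCast]
  ring

end BinaryForms

theorem linearIndependent_linearForm_pow {K : Type*} [Field K] [CharZero K] {m : ℕ}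
    (v w : Fin (m + 1) → K) (hvw : ∀ i j, i < j → v j * w i - v i * w j ≠ 0) :
    LinearIndependent K fun i => (C (v i) * X 0 + C (w i) * X 1 : MvPolynomial (Fin 2) K) ^ m := by
  let A := Matrix.projVandermonde v w * Matrix.diagonal fun j : Fin (m + 1) => (m.choose j : K)
  have hA : IsUnit A := by
    rw [Matrix.isUnit_iff_isUnit_det, isUnit_iff_ne_zero, Matrix.det_mul, Matrix.det_diagonal,
      Matrix.det_projVandermonde]
    refine mul_ne_zero (Finset.prod_ne_zero_iff.mpr fun i _ => Finset.prod_ne_zero_iff.mpr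
      fun j hj => hvw i j (Finset.mem_Ioi.mp hj)) (Finset.prod_ne_zero_iff.mpr fun j _ => ?_)
    exact_mod_cast (Nat.choose_pos (Nat.lt_succ_iff.mp j.isLt)).ne'
  have hexpand : (fun i => (C (v i) * X 0 + C (w i) * X 1 : MvPolynomial (Fin 2) K) ^ m) =
      fun i => ∑ j, A i j • (X 0 ^ (j : ℕ) * X 1 ^ (j.rev : ℕ)) := by
    simp only [linearForm_pow_eq_sum, A, Matrix.mul_diagonal, Matrix.projVandermonde_apply]
  rw [hexpand]
  exact (linearIndependent_X_zero_pow_mul_X_one_pow m).sum_smul_of_isUnit hA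

theorem stmt_6 (α β : Fin 4 → ℂ)
    (hne : ∀ k, (α k, β k) ≠ (0, 0))
    (hprop : ∀ j k, j ≠ k → ∀ c : ℂ, ¬(α k = c * α j ∧ β k = c * β j)) :
    LinearIndependent ℂ
      (fun k : Fin 4 =>
        (C (α k) * X 0 + C (β k) * X 1 : MvPolynomial (Fin 2) ℂ)^3) :=
  linearIndependent_linearForm_pow α β fun i j hij =>
    mul_sub_mul_ne_zero_of_not_proportional (hne i) (hprop i j hij.ne)
end

section
/- If a binary cubic form p over ℂ admits two representations p = (α₁x+β₁y)³ + (α₂x+β₂y)³ = (α₃x+β₃y)³ + (α₄x+β₄y)³ with the four linear forms pairwise non-proportional, then a contradiction arises; that is, the representation of a cubic as a sum of two cubes of non-proportional linear forms is unique up to order and multiplication by cube roots of unity. -/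
/-!
The Hessian of `ℓ₁³ + ℓ₂³` is, up to a constant, `D² ℓ₁ ℓ₂`, where `D` is the determinant of
the two linear forms. Since the Hessian depends only on the cubic, `D₁₂² ℓ₁ ℓ₂ = D₃₄² ℓ₃ ℓ₄`;
evaluating at the zero of `ℓ₃` shows that `ℓ₁` or `ℓ₂` vanishes there, i.e. is proportional
to `ℓ₃`.
-/

open MvPolynomial

/-- The binary cubic `a x³ + 3 b x²y + 3 c xy² + d y³`. -/
@[ext]
structure BinaryCubic (K : Type*) where
  a : K
  b : K
  c : K
  d : K

namespace BinaryCubic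

variable {K : Type*}

section CommRing

variable [CommRing K]

def eval (p : BinaryCubic K) (u v : K) : K :=
  p.a * u ^ 3 + 3 * p.b * u ^ 2 * v + 3 * p.c * u * v ^ 2 + p.d * v ^ 3

/-- The Hessian covariant, normalized by the factor `1 / 36`. -/
def hessian (p : BinaryCubic K) (u v : K) : K :=
  (p.a * p.c - p.b ^ 2) * u ^ 2 + (p.a * p.d - p.b * p.c) * u * v + (p.b * p.d - p.c ^ 2) * v ^ 2

def sumTwoCubes (a₁ b₁ a₂ b₂ : K) : BinaryCubic K :=
  ⟨a₁ ^ 3 + a₂ ^ 3, a₁ ^ 2 * b₁ + a₂ ^ 2 * b₂, a₁ * b₁ ^ 2 + a₂ * b₂ ^ 2, b₁ ^ 3 + b₂ ^ 3⟩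

theorem eval_sumTwoCubes (a₁ b₁ a₂ b₂ u v : K) :
    (sumTwoCubes a₁ b₁ a₂ b₂).eval u v = (a₁ * u + b₁ * v) ^ 3 + (a₂ * u + b₂ * v) ^ 3 := by
  simp only [eval, sumTwoCubes]
  ring

theorem hessian_sumTwoCubes (a₁ b₁ a₂ b₂ u v : K) :
    (sumTwoCubes a₁ b₁ a₂ b₂).hessian u v
      = (a₁ * b₂ - b₁ * a₂) ^ 2 * ((a₁ * u + b₁ * v) * (a₂ * u + b₂ * v)) := by
  simp only [hessian, sumTwoCubes]
  ring

theorem det_eq_zero_of_sumTwoCubes_eq [IsDomain K] {a₁ b₁ a₂ b₂ a₃ b₃ a₄ b₄ : K}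
    (h : sumTwoCubes a₁ b₁ a₂ b₂ = sumTwoCubes a₃ b₃ a₄ b₄) (h₁₂ : a₁ * b₂ - b₁ * a₂ ≠ 0) :
    a₁ * b₃ - b₁ * a₃ = 0 ∨ a₂ * b₃ - b₂ * a₃ = 0 := by
  have hzero := congrArg (fun p => hessian p b₃ (-a₃)) h
  simp only [hessian_sumTwoCubes] at hzero
  have hℓ₁ℓ₂ : (a₁ * b₃ - b₁ * a₃) * (a₂ * b₃ - b₂ * a₃) = 0 := by
    refine (mul_eq_zero.mp ?_).resolve_left (pow_ne_zero 2 h₁₂)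
    linear_combination hzero
  exact mul_eq_zero.mp hℓ₁ℓ₂

end CommRing

theorem eval_injective [Field K] [CharZero K] :
    Function.Injective (eval : BinaryCubic K → K → K → K) := by
  intro p q h
  have h10 := congrFun₂ h 1 0
  have h01 := congrFun₂ h 0 1
  have h11 := congrFun₂ h 1 1
  have h1m1 := congrFun₂ h 1 (-1)
  simp only [eval] at h10 h01 h11 h1m1
  norm_num at h10 h01 h11 h1m1
  ext
  · exact h10
  · linear_combination (h11 - h1m1 - 2 * h01) / 6
  · linear_combination (h11 + h1m1 - 2 * h10) / 6
  · exact h01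

end BinaryCubic

theorem exists_eq_mul_of_mul_sub_mul_eq_zero {K : Type*} [Field K] {a b a' b' : K}
    (h : (a, b) ≠ (0, 0)) (hdet : a * b' - b * a' = 0) : ∃ c : K, a' = c * a ∧ b' = c * b := by
  by_cases ha : a = 0
  · have hb : b ≠ 0 := fun hb => h (by simp [ha, hb])
    have ha' : a' = 0 := by simpa [ha, hb] using hdet
    exact ⟨b' / b, by simp [ha, ha'], by field_simp⟩
  · refine ⟨a' / a, by field_simp, ?_⟩
    field_simp
    linear_combination hdet

theorem stmt_7 (α β : Fin 4 → ℂ)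
    (hne : ∀ k, (α k, β k) ≠ (0, 0))
    (hprop : ∀ j k, j ≠ k → ∀ c : ℂ, ¬(α k = c * α j ∧ β k = c * β j))
    (heq : (C (α 0) * X 0 + C (β 0) * X 1 : MvPolynomial (Fin 2) ℂ)^3
            + (C (α 1) * X 0 + C (β 1) * X 1)^3
          = (C (α 2) * X 0 + C (β 2) * X 1)^3
            + (C (α 3) * X 0 + C (β 3) * X 1)^3) :
    False := by
  have hdet : ∀ j k, j ≠ k → α j * β k - β j * α k ≠ 0 := fun j k hjk h =>
    let ⟨c, hc⟩ := exists_eq_mul_of_mul_sub_mul_eq_zero (hne j) h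
    hprop j k hjk c hc
  have hcubic : BinaryCubic.sumTwoCubes (α 0) (β 0) (α 1) (β 1)
      = BinaryCubic.sumTwoCubes (α 2) (β 2) (α 3) (β 3) := by
    apply BinaryCubic.eval_injective
    funext u v
    simpa [BinaryCubic.eval_sumTwoCubes] using congrArg (eval ![u, v]) heq
  rcases BinaryCubic.det_eq_zero_of_sumTwoCubes_eq hcubic (hdet 0 1 (by decide)) with h | h
  · exact hdet 0 2 (by decide) h
  · exact hdet 1 2 (by decide) h
end

section
/- If f₁ and f₂ are relatively prime binary quadratic forms over ℂ, then there is an invertible linear change of variables M such that both f₁∘M and f₂∘M are even, i.e., of the form ax² + cy² (no xy term). -/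
open MvPolynomial

/-- Composition of a binary form with a linear change of variables given by a matrix. -/
noncomputable def comp2 (f : MvPolynomial (Fin 2) ℂ) (M : Matrix (Fin 2) (Fin 2) ℂ) :
    MvPolynomial (Fin 2) ℂ :=
  aeval (fun i : Fin 2 => C (M i 0) * X 0 + C (M i 1) * X 1) f

/-- A binary quadratic form is even if its `xy` coefficient vanishes. -/
def IsEvenQuad (f : MvPolynomial (Fin 2) ℂ) : Prop :=
  MvPolynomial.coeff (Finsupp.single 0 1 + Finsupp.single 1 1) f = 0

/-!
The `xy`-coefficient of `f ∘ M` is the polar form of `f` evaluated at the two columns of `M`, so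
we need a basis `(u, v)` of `ℂ²` that is orthogonal for the polar forms of both `f₁` and `f₂`.
For `v` take a nonzero zero of the Jacobian `∂(f₁, f₂)/∂(x, y)`, itself a binary quadratic form.
A common zero of `f₁` and `f₂` would give a common linear factor, so `f₁(v) ≠ 0`, say. Then the
vector `u` that is `f₁`-orthogonal to `v` is also `f₂`-orthogonal to it, since the Jacobian
vanishes at `v`, and is independent of `v`, since `f₁(v) ≠ 0`.
-/

lemma Finsupp.ext_iff_fin_two {m n : Fin 2 →₀ ℕ} : m = n ↔ m 0 = n 0 ∧ m 1 = n 1 := by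
  simp [Finsupp.ext_iff, Fin.forall_fin_two]

section CommSemiring

variable {R : Type*} [CommSemiring R]

noncomputable def quadForm (a b c : R) : MvPolynomial (Fin 2) R :=
  C a * X 0 ^ 2 + C b * (X 0 * X 1) + C c * X 1 ^ 2

lemma coeff_quadForm (a b c : R) (m : Fin 2 →₀ ℕ) :
    coeff m (quadForm a b c) =
      (if m 0 = 2 ∧ m 1 = 0 then a else 0) + (if m 0 = 1 ∧ m 1 = 1 then b else 0) +
        (if m 0 = 0 ∧ m 1 = 2 then c else 0) := by
  simp [quadForm, X, monomial_pow, monomial_mul, coeff_monomial, coeff_C_mul,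
    Finsupp.ext_iff_fin_two, eq_comm]

lemma coeff_quadForm_xy (a b c : R) :
    coeff (Finsupp.single 0 1 + Finsupp.single 1 1) (quadForm a b c) = b := by
  simp [coeff_quadForm]

lemma MvPolynomial.IsHomogeneous.eq_quadForm {f : MvPolynomial (Fin 2) R}
    (hf : f.IsHomogeneous 2) :
    f = quadForm (coeff (Finsupp.single 0 2) f)
      (coeff (Finsupp.single 0 1 + Finsupp.single 1 1) f) (coeff (Finsupp.single 1 2) f) := by
  ext m
  rw [coeff_quadForm]
  by_cases hm : m 0 + m 1 = 2
  · have hm_eq : m = Finsupp.single 0 (m 0) + Finsupp.single 1 (m 1) := by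
      simp [Finsupp.ext_iff_fin_two]
    obtain h | h | h : (m 0 = 2 ∧ m 1 = 0) ∨ (m 0 = 1 ∧ m 1 = 1) ∨ (m 0 = 0 ∧ m 1 = 2) := by
      omega
    all_goals rw [hm_eq, h.1, h.2]; simp
  · rw [hf.coeff_eq_zero, if_neg (by omega), if_neg (by omega), if_neg (by omega)]
    · simp
    · simpa [Finsupp.degree_eq_sum, Fin.sum_univ_two] using hm

lemma eval_quadForm (a b c : R) (v : Fin 2 → R) :
    eval v (quadForm a b c) = a * v 0 ^ 2 + b * (v 0 * v 1) + c * v 1 ^ 2 := by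
  simp [quadForm]

end CommSemiring

section CommRing

variable {R : Type*} [CommRing R]

lemma not_isUnit_C_mul_X_sub_C_mul_X [Nontrivial R] (p q : R) :
    ¬ IsUnit (C q * X 0 - C p * X 1 : MvPolynomial (Fin 2) R) := by
  intro h
  simpa using h.map (eval 0)

/-- The Jacobian `∂(f₁, f₂)/∂(x, y)` of `f₁ = quadForm a₁ b₁ c₁` and `f₂ = quadForm a₂ b₂ c₂`. -/
noncomputable def quadJacobian (a₁ b₁ c₁ a₂ b₂ c₂ : R) : MvPolynomial (Fin 2) R :=
  quadForm (2 * (a₁ * b₂ - a₂ * b₁)) (4 * (a₁ * c₂ - a₂ * c₁)) (2 * (b₁ * c₂ - b₂ * c₁))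

lemma quadJacobian_swap (a₁ b₁ c₁ a₂ b₂ c₂ : R) :
    quadJacobian a₂ b₂ c₂ a₁ b₁ c₁ = -quadJacobian a₁ b₁ c₁ a₂ b₂ c₂ := by
  simp only [quadJacobian, quadForm, map_mul, map_sub, map_ofNat]
  ring

end CommRing

section Field

variable {K : Type*} [Field K]

lemma exists_ne_zero_eval_quadForm_eq_zero [IsAlgClosed K] (a b c : K) :
    ∃ v : Fin 2 → K, v ≠ 0 ∧ eval v (quadForm a b c) = 0 := by
  by_cases ha : a = 0
  · exact ⟨![1, 0], by simp, by simp [eval_quadForm, ha]⟩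
  · obtain ⟨x, hx⟩ := IsAlgClosed.exists_root (.C a * .X ^ 2 + .C b * .X + .C c)
      (by rw [Polynomial.degree_quadratic ha]; decide)
    simp only [Polynomial.IsRoot, Polynomial.eval_add, Polynomial.eval_mul, Polynomial.eval_C,
      Polynomial.eval_pow, Polynomial.eval_X] at hx
    refine ⟨![x, 1], by simp, ?_⟩
    simp only [eval_quadForm, Matrix.cons_val_zero, Matrix.cons_val_one]
    linear_combination hx

lemma dvd_quadForm_of_eval_eq_zero {a b c : K} {v : Fin 2 → K} (hv : v ≠ 0)
    (h : eval v (quadForm a b c) = 0) :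
    C (v 1) * X 0 - C (v 0) * X 1 ∣ quadForm a b c := by
  rw [eval_quadForm] at h
  obtain ⟨u, w, rfl, rfl, rfl⟩ :
      ∃ u w : K, a = v 1 * u ∧ b = v 1 * w - v 0 * u ∧ c = -(v 0 * w) := by
    by_cases h0 : v 0 = 0
    · have h1 : v 1 ≠ 0 := fun h1 => hv (funext (by simp [Fin.forall_fin_two, h0, h1]))
      refine ⟨a / v 1, b / v 1, by field_simp, by field_simp; simp [h0], ?_⟩
      simpa [h0, h1] using h
    · refine ⟨-((v 1 * c + b * v 0) / v 0 ^ 2), -(c / v 0), ?_, ?_, ?_⟩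
      · field_simp; linear_combination h
      · field_simp; ring
      · field_simp
  exact ⟨C u * X 0 + C w * X 1, by simp only [quadForm, map_mul, map_sub, map_neg]; ring⟩

end Field

lemma comp2_quadForm (a b c : ℂ) (M : Matrix (Fin 2) (Fin 2) ℂ) :
    comp2 (quadForm a b c) M =
      quadForm (a * M 0 0 ^ 2 + b * (M 0 0 * M 1 0) + c * M 1 0 ^ 2)
        (2 * a * M 0 0 * M 0 1 + b * (M 0 0 * M 1 1 + M 0 1 * M 1 0) + 2 * c * M 1 0 * M 1 1)
        (a * M 0 1 ^ 2 + b * (M 0 1 * M 1 1) + c * M 1 1 ^ 2) := by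
  simp only [comp2, quadForm, map_add, map_mul, map_pow, aeval_X, aeval_C, algebraMap_eq,
    map_ofNat]
  ring

lemma isEvenQuad_comp2_quadForm_iff (a b c : ℂ) (M : Matrix (Fin 2) (Fin 2) ℂ) :
    IsEvenQuad (comp2 (quadForm a b c) M) ↔
      2 * a * M 0 0 * M 0 1 + b * (M 0 0 * M 1 1 + M 0 1 * M 1 0) + 2 * c * M 1 0 * M 1 1 = 0 := by
  rw [IsEvenQuad, comp2_quadForm, coeff_quadForm_xy]

/-- The first column of `M` is the gradient of `f₁` at `v` turned by a right angle, so it is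
`f₁`-orthogonal to the second column `v`, and `det M = -2 f₁(v)`. -/
theorem exists_isEvenQuad_comp2_of_eval_quadJacobian_eq_zero {a₁ b₁ c₁ a₂ b₂ c₂ : ℂ}
    {v : Fin 2 → ℂ} (hJ : eval v (quadJacobian a₁ b₁ c₁ a₂ b₂ c₂) = 0)
    (h₁ : eval v (quadForm a₁ b₁ c₁) ≠ 0) :
    ∃ M : Matrix (Fin 2) (Fin 2) ℂ, IsUnit M.det ∧
      IsEvenQuad (comp2 (quadForm a₁ b₁ c₁) M) ∧ IsEvenQuad (comp2 (quadForm a₂ b₂ c₂) M) := by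
  rw [quadJacobian, eval_quadForm] at hJ
  rw [eval_quadForm] at h₁
  refine ⟨!![-(b₁ * v 0 + 2 * c₁ * v 1), v 0; 2 * a₁ * v 0 + b₁ * v 1, v 1], ?_, ?_, ?_⟩
  · rw [Matrix.det_fin_two_of, isUnit_iff_ne_zero]
    contrapose! h₁
    linear_combination -h₁ / 2
  all_goals
    rw [isEvenQuad_comp2_quadForm_iff]
    simp only [Matrix.of_apply, Matrix.cons_val', Matrix.cons_val_zero, Matrix.cons_val_one,
      Matrix.empty_val', Matrix.cons_val_fin_one]
  · ring
  · linear_combination hJ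

theorem stmt_9 (f₁ f₂ : MvPolynomial (Fin 2) ℂ)
    (h₁ : f₁.IsHomogeneous 2) (h₂ : f₂.IsHomogeneous 2)
    (hcop : ∀ d : MvPolynomial (Fin 2) ℂ, d ∣ f₁ → d ∣ f₂ → IsUnit d) :
    ∃ M : Matrix (Fin 2) (Fin 2) ℂ, IsUnit M.det ∧
      IsEvenQuad (comp2 f₁ M) ∧ IsEvenQuad (comp2 f₂ M) := by
  obtain ⟨a₁, b₁, c₁, rfl⟩ : ∃ a b c, f₁ = quadForm a b c := ⟨_, _, _, h₁.eq_quadForm⟩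
  obtain ⟨a₂, b₂, c₂, rfl⟩ : ∃ a b c, f₂ = quadForm a b c := ⟨_, _, _, h₂.eq_quadForm⟩
  obtain ⟨v, hv, hJ⟩ : ∃ v : Fin 2 → ℂ, v ≠ 0 ∧ eval v (quadJacobian a₁ b₁ c₁ a₂ b₂ c₂) = 0 :=
    exists_ne_zero_eval_quadForm_eq_zero _ _ _
  have h_not_common_zero :
      eval v (quadForm a₁ b₁ c₁) ≠ 0 ∨ eval v (quadForm a₂ b₂ c₂) ≠ 0 := by
    by_contra! h
    exact not_isUnit_C_mul_X_sub_C_mul_X _ _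
      (hcop _ (dvd_quadForm_of_eval_eq_zero hv h.1) (dvd_quadForm_of_eval_eq_zero hv h.2))
  rcases h_not_common_zero with h | h
  · exact exists_isEvenQuad_comp2_of_eval_quadJacobian_eq_zero hJ h
  · have hJ' : eval v (quadJacobian a₂ b₂ c₂ a₁ b₁ c₁) = 0 := by
      rw [quadJacobian_swap, map_neg, hJ, neg_zero]
    obtain ⟨M, hM, e₂, e₁⟩ := exists_isEvenQuad_comp2_of_eval_quadJacobian_eq_zero hJ' h
    exact ⟨M, hM, e₁, e₂⟩
end

section
/- Suppose binary quadratic forms f₁, f₂, f₃, f₄ over ℂ are pairwise non-proportional, satisfy f₁³ + f₂³ = f₃³ + f₄³ and f₁ + f₂ = T(f₃ + f₄) for some T ∈ ℂ. Then T ≠ 0 and T³ ≠ 1. -/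
/-!
Put `s = f₁ + f₂`. If `T = 0` then `f₂ = -f₁`. If `T³ = 1`, then `s³ = (f₃ + f₄)³`, so comparing
`a³ + b³ = (a + b)³ - 3ab(a + b)` on both sides gives `f₃ f₄ = T f₁ f₂`. Since also
`f₃ + f₄ = T² s`, the pairs `{f₃, f₄}` and `{T² f₁, T² f₂}` have the same sum and product, hence
`f₃` is `T² f₁` or `T² f₂`.
-/

/-- Two binary forms are non-proportional if neither is a scalar multiple of the other. -/
def NonProp (f g : MvPolynomial (Fin 2) ℂ) : Prop :=
  (∀ c : ℂ, g ≠ c • f) ∧ (∀ c : ℂ, f ≠ c • g)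

theorem NonProp.add_ne_zero {f g : MvPolynomial (Fin 2) ℂ} (h : NonProp f g) : f + g ≠ 0 :=
  fun hfg => h.1 (-1) (by rw [neg_one_smul]; exact eq_neg_of_add_eq_zero_right hfg)

section CubeSums

variable {R : Type*} [CommRing R] [NoZeroDivisors R]

theorem mul_eq_mul_of_cube_add_cube_eq {a b c d t : R} (h3 : (3 : R) ≠ 0)
    (hcubes : a ^ 3 + b ^ 3 = c ^ 3 + d ^ 3) (hsum : a + b = t * (c + d)) (ht : t ^ 3 = 1)
    (hcd : c + d ≠ 0) : c * d = t * (a * b) := by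
  have hfactor : 3 * (c + d) * (c * d - t * (a * b)) = 0 := by
    linear_combination hcubes +
      (3 * a * b - (a + b) ^ 2 - (a + b) * t * (c + d) - t ^ 2 * (c + d) ^ 2) * hsum -
      (c + d) ^ 3 * ht
  exact sub_eq_zero.mp ((mul_eq_zero.mp hfactor).resolve_left (mul_ne_zero h3 hcd))

theorem eq_or_eq_of_cube_add_cube_eq {a b c d t : R} (h3 : (3 : R) ≠ 0)
    (hcubes : a ^ 3 + b ^ 3 = c ^ 3 + d ^ 3) (hsum : a + b = t * (c + d)) (ht : t ^ 3 = 1)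
    (hcd : c + d ≠ 0) : c = t ^ 2 * a ∨ c = t ^ 2 * b := by
  have hprod := mul_eq_mul_of_cube_add_cube_eq h3 hcubes hsum ht hcd
  have hroots : (c - t ^ 2 * a) * (c - t ^ 2 * b) = 0 := by
    linear_combination (-t ^ 2 * c) * hsum + (t * a * b - c * (c + d)) * ht - hprod
  exact (mul_eq_zero.mp hroots).imp sub_eq_zero.mp sub_eq_zero.mp

end CubeSums

theorem stmt_12_general (f₁ f₂ f₃ f₄ : MvPolynomial (Fin 2) ℂ) (T : ℂ)
    (hp : NonProp f₁ f₂ ∧ NonProp f₁ f₃ ∧ NonProp f₁ f₄ ∧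
          NonProp f₂ f₃ ∧ NonProp f₂ f₄ ∧ NonProp f₃ f₄)
    (heq : f₁^3 + f₂^3 = f₃^3 + f₄^3)
    (hT : f₁ + f₂ = T • (f₃ + f₄)) :
    T ≠ 0 ∧ T^3 ≠ 1 := by
  obtain ⟨h12, h13, -, h23, -, h34⟩ := hp
  refine ⟨fun hT0 => h12.add_ne_zero (by rw [hT, hT0, zero_smul]), fun hT3 => ?_⟩
  have hsum : f₁ + f₂ = MvPolynomial.C T * (f₃ + f₄) := by rw [hT, MvPolynomial.smul_eq_C_mul]
  have hC3 : (MvPolynomial.C T : MvPolynomial (Fin 2) ℂ) ^ 3 = 1 := by rw [← map_pow, hT3, map_one]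
  rcases eq_or_eq_of_cube_add_cube_eq (by norm_num) heq hsum hC3 h34.add_ne_zero with h | h
  · exact h13.1 (T ^ 2) (by rw [MvPolynomial.smul_eq_C_mul, map_pow, h])
  · exact h23.1 (T ^ 2) (by rw [MvPolynomial.smul_eq_C_mul, map_pow, h])

theorem stmt_12 (f₁ f₂ f₃ f₄ : MvPolynomial (Fin 2) ℂ) (T : ℂ)
    (h₁ : f₁.IsHomogeneous 2) (h₂ : f₂.IsHomogeneous 2)
    (h₃ : f₃.IsHomogeneous 2) (h₄ : f₄.IsHomogeneous 2)
    (hp : NonProp f₁ f₂ ∧ NonProp f₁ f₃ ∧ NonProp f₁ f₄ ∧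
          NonProp f₂ f₃ ∧ NonProp f₂ f₄ ∧ NonProp f₃ f₄)
    (heq : f₁^3 + f₂^3 = f₃^3 + f₄^3)
    (hT : f₁ + f₂ = T • (f₃ + f₄)) :
    T ≠ 0 ∧ T^3 ≠ 1 :=
  stmt_12_general f₁ f₂ f₃ f₄ T hp heq hT
end

section
/- There is no honest solution to f₁³ + f₂³ = f₃³ + f₄³ with f_j ∈ ℚ[x,y] binary quadratic forms satisfying f₁ + f₂ = 2(f₃ + f₄); i.e., no rational Type(2) family exists. -/
/-- Two rational binary forms are non-proportional if neither is a scalar multiple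
of the other. -/
def NonPropQ (f g : MvPolynomial (Fin 2) ℚ) : Prop :=
  (∀ c : ℚ, g ≠ c • f) ∧ (∀ c : ℚ, f ≠ c • g)

/-!
Write `s = f₃ + f₄`, `v = f₁ - f₂`, `w = f₃ - f₄`. Since `4 (x³ + y³) = (x + y)³ + 3 (x + y) (x - y)²`
and `f₁ + f₂ = 2 s`, the cubic relation becomes `s (7 s² + 6 v² - 3 w²) = 0`. The equation
`7 A² + 6 B² = 3 C²` forces `A = 0` over `ℤ` by descent modulo 3, hence over `ℚ` and, evaluating
pointwise, over `ℚ[x, y]`. So `s = 0`, then `f₁ + f₂ = 0`, and the common value `f₁³ + f₂³` vanishes.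
-/

theorem Int.three_dvd_of_seven_sq_add_six_sq_eq_three_sq {a b c : ℤ}
    (h : 7 * a ^ 2 + 6 * b ^ 2 = 3 * c ^ 2) : 3 ∣ a ∧ 3 ∣ b ∧ 3 ∣ c := by
  have dvd_of_cast : ∀ x : ℤ, (x : ZMod 3) = 0 → 3 ∣ x := fun x =>
    (ZMod.intCast_zmod_eq_zero_iff_dvd x 3).mp
  have ha : 3 ∣ a := by
    have h3 := congrArg (Int.cast : ℤ → ZMod 3) h
    push_cast at h3
    refine dvd_of_cast a ?_
    generalize (a : ZMod 3) = x, (b : ZMod 3) = y, (c : ZMod 3) = z at h3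
    revert x y z; decide
  obtain ⟨a', rfl⟩ := ha
  -- after dividing by 3 the equation reads `21 a'² + 2 b² = c²`, and 2 is not a square mod 3
  have h3 := congrArg (Int.cast : ℤ → ZMod 3) (by linarith :
    21 * a' ^ 2 + 2 * b ^ 2 = c ^ 2)
  push_cast at h3
  have hbc : (b : ZMod 3) = 0 ∧ (c : ZMod 3) = 0 := by
    generalize (a' : ZMod 3) = x, (b : ZMod 3) = y, (c : ZMod 3) = z at h3 ⊢
    revert x y z; decide
  exact ⟨dvd_mul_right 3 a', dvd_of_cast b hbc.1, dvd_of_cast c hbc.2⟩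

theorem Int.eq_zero_of_seven_sq_add_six_sq_eq_three_sq {a b c : ℤ}
    (h : 7 * a ^ 2 + 6 * b ^ 2 = 3 * c ^ 2) : a = 0 := by
  induction hn : a.natAbs using Nat.strong_induction_on generalizing a b c with
  | _ n ih =>
    obtain ⟨⟨a', rfl⟩, ⟨b', rfl⟩, ⟨c', rfl⟩⟩ := three_dvd_of_seven_sq_add_six_sq_eq_three_sq h
    have h' : 7 * a' ^ 2 + 6 * b' ^ 2 = 3 * c' ^ 2 := by linarith
    by_contra ha
    have hlt : a'.natAbs < n := by omega
    exact ha (by rw [ih _ hlt h' rfl, mul_zero])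

theorem Rat.eq_zero_of_seven_sq_add_six_sq_eq_three_sq {a b c : ℚ}
    (h : 7 * a ^ 2 + 6 * b ^ 2 = 3 * c ^ 2) : a = 0 := by
  set d : ℕ := a.den * b.den * c.den
  have hd : (d : ℚ) ≠ 0 := by positivity
  have clear_den : ∀ q : ℚ, q.den ∣ d → ∃ Q : ℤ, (Q : ℚ) = q * d := by
    rintro q ⟨k, hk⟩
    exact ⟨q.num * k, by rw [hk]; push_cast; rw [← mul_assoc, Rat.mul_den_eq_num]⟩
  obtain ⟨A, hA⟩ := clear_den a ⟨b.den * c.den, by ring⟩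
  obtain ⟨B, hB⟩ := clear_den b ⟨a.den * c.den, by ring⟩
  obtain ⟨C, hC⟩ := clear_den c ⟨a.den * b.den, by ring⟩
  have hABC : 7 * A ^ 2 + 6 * B ^ 2 = 3 * C ^ 2 := by
    exact_mod_cast (by rw [hA, hB, hC]; linear_combination (d : ℚ) ^ 2 * h :
      7 * (A : ℚ) ^ 2 + 6 * (B : ℚ) ^ 2 = 3 * (C : ℚ) ^ 2)
  have hA0 := Int.eq_zero_of_seven_sq_add_six_sq_eq_three_sq hABC
  rw [hA0, Int.cast_zero, eq_comm, mul_eq_zero] at hA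
  exact hA.resolve_right hd

theorem MvPolynomial.eq_zero_of_seven_sq_add_six_sq_eq_three_sq {σ : Type*}
    {f g h : MvPolynomial σ ℚ} (hfgh : 7 * f ^ 2 + 6 * g ^ 2 = 3 * h ^ 2) : f = 0 :=
  MvPolynomial.funext fun x => by
    simpa using
      Rat.eq_zero_of_seven_sq_add_six_sq_eq_three_sq (by simpa using congrArg (eval x) hfgh)

theorem mul_seven_sq_add_six_sq_sub_three_sq_eq_zero {R : Type*} [CommRing R] {f₁ f₂ f₃ f₄ : R}
    (hcubes : f₁ ^ 3 + f₂ ^ 3 = f₃ ^ 3 + f₄ ^ 3) (hsum : f₁ + f₂ = 2 * (f₃ + f₄)) :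
    (f₃ + f₄) * (7 * (f₃ + f₄) ^ 2 + 6 * (f₁ - f₂) ^ 2 - 3 * (f₃ - f₄) ^ 2) = 0 := by
  linear_combination 4 * hcubes -
    (4 * (f₃ + f₄) ^ 2 + 2 * (f₃ + f₄) * (f₁ + f₂) + (f₁ + f₂) ^ 2 + 3 * (f₁ - f₂) ^ 2) * hsum

theorem stmt_15 :
    ¬ ∃ f₁ f₂ f₃ f₄ : MvPolynomial (Fin 2) ℚ,
      f₁.IsHomogeneous 2 ∧ f₂.IsHomogeneous 2 ∧
      f₃.IsHomogeneous 2 ∧ f₄.IsHomogeneous 2 ∧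
      NonPropQ f₁ f₂ ∧ NonPropQ f₁ f₃ ∧ NonPropQ f₁ f₄ ∧
      NonPropQ f₂ f₃ ∧ NonPropQ f₂ f₄ ∧ NonPropQ f₃ f₄ ∧
      f₁^3 + f₂^3 = f₃^3 + f₄^3 ∧ f₁^3 + f₂^3 ≠ 0 ∧
      f₁ + f₂ = 2 * (f₃ + f₄) := by
  rintro ⟨f₁, f₂, f₃, f₄, -, -, -, -, -, -, -, -, -, -, hcubes, hne, hsum⟩
  have hs : f₃ + f₄ = 0 := by
    rcases mul_eq_zero.mp (mul_seven_sq_add_six_sq_sub_three_sq_eq_zero hcubes hsum) with hs | hq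
    · exact hs
    · exact MvPolynomial.eq_zero_of_seven_sq_add_six_sq_eq_three_sq (sub_eq_zero.mp hq)
  have hu : f₁ + f₂ = 0 := by rw [hsum, hs, mul_zero]
  exact hne (by linear_combination (f₁ ^ 2 - f₁ * f₂ + f₂ ^ 2) * hu)
end

section
/- The binary sextic (x² + y²)³ cannot be written as f₁³ + f₂³ for non-proportional binary quadratic forms f₁, f₂ over ℂ. -/
/-!
Dehomogenize: `P = f₁(x, 1)` and `Q = f₂(x, 1)` have degree at most `2` and
`P³ + Q³ = (x - i)³ (x + i)³`. If `P(j) ≠ 0` for one of `j = ±i`, put `μ = Q(j) / P(j)`, so that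
`μ³ = -1`, and factor `P³ + Q³ = (Q - μP)(Q² + μPQ + μ²P²)`. The second factor takes the value
`3μ²P(j)² ≠ 0` at `j`, so `(x - j)³` divides `Q - μP`, which has degree at most `2` and therefore
vanishes. Otherwise `P` and `Q` both vanish at `±i`, so both are multiples of `x² + 1`. Either
way `P` and `Q` are proportional, and hence so are the quadratic forms `f₁` and `f₂`.
-/

open scoped Polynomial

namespace Polynomial

variable {K : Type*} [Field K]

theorem exists_X_sub_C_pow_dvd_sub_C_mul_of_dvd_cube_add_cube [NeZero (3 : K)]
    {P Q : K[X]} {j : K} {n : ℕ} (hn : n ≠ 0) (hPj : P.eval j ≠ 0)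
    (h : (X - C j) ^ n ∣ P ^ 3 + Q ^ 3) : ∃ μ : K, (X - C j) ^ n ∣ Q - C μ * P := by
  obtain ⟨μ, hQj⟩ : ∃ μ, Q.eval j = μ * P.eval j := ⟨_, (div_mul_cancel₀ _ hPj).symm⟩
  have hroot : P.eval j ^ 3 + Q.eval j ^ 3 = 0 := by
    simpa using dvd_iff_isRoot.mp (dvd_trans (dvd_pow_self _ hn) h)
  have hμ : μ ^ 3 = -1 := by
    apply mul_right_cancel₀ (pow_ne_zero 3 hPj)
    linear_combination
      hroot - (Q.eval j ^ 2 + μ * P.eval j * Q.eval j + μ ^ 2 * P.eval j ^ 2) * hQj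
  have hCμ : C μ ^ 3 = -1 := by rw [← C_pow, hμ, C_neg, C_1]
  set S := Q ^ 2 + C μ * P * Q + C μ ^ 2 * P ^ 2
  have hfactor : P ^ 3 + Q ^ 3 = (Q - C μ * P) * S := by
    linear_combination P ^ 3 * hCμ
  have hSj : ¬ X - C j ∣ S := by
    simp only [S, dvd_iff_isRoot, IsRoot, eval_add, eval_mul, eval_pow, eval_C, hQj]
    have hμ0 : μ ≠ 0 := by rintro rfl; norm_num at hμ
    have h3 : 3 * μ ^ 2 * P.eval j ^ 2 ≠ 0 :=
      mul_ne_zero (mul_ne_zero (NeZero.ne (3 : K)) (pow_ne_zero 2 hμ0)) (pow_ne_zero 2 hPj)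
    exact fun hS ↦ h3 (by linear_combination hS)
  rw [hfactor] at h
  exact ⟨μ, ((irreducible_X_sub_C j).coprime_pow_of_not_dvd n hSj).symm.dvd_of_dvd_mul_right h⟩

theorem exists_eq_C_mul_of_X_sub_C_pow_dvd_cube_add_cube [NeZero (3 : K)]
    {P Q : K[X]} {j : K} {n : ℕ} (hP : P.natDegree < n) (hQ : Q.natDegree < n)
    (hPj : P.eval j ≠ 0) (h : (X - C j) ^ n ∣ P ^ 3 + Q ^ 3) : ∃ μ : K, Q = C μ * P := by
  obtain ⟨μ, hμ⟩ := exists_X_sub_C_pow_dvd_sub_C_mul_of_dvd_cube_add_cube (by omega) hPj h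
  have hdeg : (Q - C μ * P).natDegree < ((X - C j) ^ n).natDegree := by
    rw [natDegree_pow, natDegree_X_sub_C, mul_one]
    exact (natDegree_sub_le _ _).trans_lt (max_lt hQ ((natDegree_C_mul_le _ _).trans_lt hP))
  exact ⟨μ, sub_eq_zero.mp (eq_zero_of_dvd_of_natDegree_lt hμ hdeg)⟩

theorem exists_eq_C_mul_of_dvd_of_natDegree_le {r P Q : K[X]} (hr : r ≠ 0)
    (hP : P.natDegree ≤ r.natDegree) (hQ : Q.natDegree ≤ r.natDegree) (hrP : r ∣ P)
    (hrQ : r ∣ Q) : ∃ c : K, Q = C c * P ∨ P = C c * Q := by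
  have eq_C_mul : ∀ {F : K[X]}, F.natDegree ≤ r.natDegree → r ∣ F → ∃ a, F = C a * r := by
    rintro F hF ⟨g, rfl⟩
    rcases eq_or_ne g 0 with rfl | hg
    · exact ⟨0, by simp⟩
    rw [natDegree_mul hr hg] at hF
    exact ⟨g.coeff 0, by rw [mul_comm, ← eq_C_of_natDegree_le_zero (by omega)]⟩
  obtain ⟨a, rfl⟩ := eq_C_mul hP hrP
  obtain ⟨b, rfl⟩ := eq_C_mul hQ hrQ
  rcases eq_or_ne a 0 with rfl | ha
  · exact ⟨0, Or.inr (by simp)⟩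
  · exact ⟨b / a, Or.inl (by rw [← mul_assoc, ← C_mul, div_mul_cancel₀ b ha])⟩

theorem exists_eq_C_mul_of_cube_add_cube_eq [NeZero (3 : K)] {P Q : K[X]} {a b : K}
    (hab : a ≠ b) (hP : P.natDegree ≤ 2) (hQ : Q.natDegree ≤ 2)
    (h : P ^ 3 + Q ^ 3 = ((X - C a) * (X - C b)) ^ 3) :
    ∃ c : K, Q = C c * P ∨ P = C c * Q := by
  have of_eval_ne_zero : ∀ j, (X - C j) ^ 3 ∣ P ^ 3 + Q ^ 3 → P.eval j ≠ 0 →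
      ∃ c : K, Q = C c * P ∨ P = C c * Q := fun j hj hPj ↦
    (exists_eq_C_mul_of_X_sub_C_pow_dvd_cube_add_cube (Nat.lt_succ_of_le hP)
      (Nat.lt_succ_of_le hQ) hPj hj).imp fun _ ↦ Or.inl
  by_cases hPa : P.eval a = 0
  swap
  · exact of_eval_ne_zero a (by rw [h, mul_pow]; exact dvd_mul_right _ _) hPa
  by_cases hPb : P.eval b = 0
  swap
  · exact of_eval_ne_zero b (by rw [h, mul_pow]; exact dvd_mul_left _ _) hPb
  have hQa : Q.eval a = 0 := by simpa [hPa] using congrArg (eval a) h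
  have hQb : Q.eval b = 0 := by simpa [hPb] using congrArg (eval b) h
  have hr : ((X - C a) * (X - C b)).natDegree = 2 := by
    rw [natDegree_mul (X_sub_C_ne_zero a) (X_sub_C_ne_zero b), natDegree_X_sub_C,
      natDegree_X_sub_C]
  have hcop : IsCoprime (X - C a) (X - C b) :=
    pairwise_coprime_X_sub_C (s := id) (fun _ _ ↦ id) hab
  exact exists_eq_C_mul_of_dvd_of_natDegree_le
    (mul_ne_zero (X_sub_C_ne_zero a) (X_sub_C_ne_zero b)) (hr ▸ hP) (hr ▸ hQ)
    (hcop.mul_dvd (dvd_iff_isRoot.mpr hPa) (dvd_iff_isRoot.mpr hPb))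
    (hcop.mul_dvd (dvd_iff_isRoot.mpr hQa) (dvd_iff_isRoot.mpr hQb))

theorem X_sq_add_one_eq_X_sub_C_I_mul :
    (X ^ 2 + 1 : ℂ[X]) = (X - C Complex.I) * (X - C (-Complex.I)) := by
  have hCI : C Complex.I ^ 2 = -1 := by rw [← C_pow, Complex.I_sq, C_neg, C_1]
  rw [C_neg]
  linear_combination hCI

end Polynomial

namespace MvPolynomial

variable {R : Type*} [CommSemiring R] {n : ℕ} {q q' : MvPolynomial (Fin 2) R}

theorem IsHomogeneous.natDegree_aeval_X_one_le (hq : q.IsHomogeneous n) :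
    (MvPolynomial.aeval ![(Polynomial.X : R[X]), 1] q).natDegree ≤ n := by
  rw [q.as_sum, map_sum]
  refine Polynomial.natDegree_sum_le_of_forall_le _ _ fun m hm ↦ ?_
  rw [MvPolynomial.aeval_monomial, Finsupp.prod_fintype _ _ (by simp), Fin.prod_univ_two]
  simp only [Matrix.cons_val_zero, Matrix.cons_val_one, one_pow, mul_one,
    ← Polynomial.C_eq_algebraMap]
  refine (Polynomial.natDegree_C_mul_X_pow_le _ _).trans ?_
  have hm_deg := hq (mem_support_iff.mp hm)
  simp only [Finsupp.weight_apply, Pi.one_apply, smul_eq_mul, mul_one, Finsupp.sum_fintype,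
    implies_true, Fin.sum_univ_two] at hm_deg
  omega

theorem IsHomogeneous.eq_of_aeval_X_one_eq (hq : q.IsHomogeneous n) (hq' : q'.IsHomogeneous n)
    (h : MvPolynomial.aeval ![(Polynomial.X : R[X]), 1] q =
      MvPolynomial.aeval ![(Polynomial.X : R[X]), 1] q') :
    q = q' := by
  rw [← Polynomial.homogenize_eq_of_isHomogeneous hq rfl,
    ← Polynomial.homogenize_eq_of_isHomogeneous hq' rfl, h]

end MvPolynomial

open MvPolynomial

theorem stmt_19 :
    ¬ ∃ f₁ f₂ : MvPolynomial (Fin 2) ℂ,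
      f₁.IsHomogeneous 2 ∧ f₂.IsHomogeneous 2 ∧
      (∀ c : ℂ, f₂ ≠ c • f₁) ∧ (∀ c : ℂ, f₁ ≠ c • f₂) ∧
      ((X 0)^2 + (X 1)^2 : MvPolynomial (Fin 2) ℂ)^3 = f₁^3 + f₂^3 := by
  rintro ⟨f₁, f₂, h₁, h₂, hne₁, hne₂, heq⟩
  have hsum : (aeval ![(Polynomial.X : ℂ[X]), 1] f₁) ^ 3 + (aeval ![Polynomial.X, 1] f₂) ^ 3
      = ((Polynomial.X - Polynomial.C Complex.I) *
        (Polynomial.X - Polynomial.C (-Complex.I))) ^ 3 := by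
    rw [← Polynomial.X_sq_add_one_eq_X_sub_C_I_mul]
    simpa using (congrArg (aeval ![(Polynomial.X : ℂ[X]), 1]) heq).symm
  obtain ⟨c, hc | hc⟩ := Polynomial.exists_eq_C_mul_of_cube_add_cube_eq
    (by norm_num [Complex.ext_iff]) h₁.natDegree_aeval_X_one_le h₂.natDegree_aeval_X_one_le hsum
  · exact hne₁ c <| h₂.eq_of_aeval_X_one_eq (smul_eq_C_mul f₁ c ▸ h₁.C_mul c)
      (by simp [hc, Polynomial.smul_eq_C_mul])
  · exact hne₂ c <| h₁.eq_of_aeval_X_one_eq (smul_eq_C_mul f₂ c ▸ h₂.C_mul c)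
      (by simp [hc, Polynomial.smul_eq_C_mul])
end
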